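/- Let G be a topological group, Γ a discrete subgroup, and let μ_G denote a Haar measure on G. If E ⊆ G/Γ is a measurable set whose preimage in G is μ_G-null (i.e. E has measure zero with respect to the induced measure on G/Γ), then for any Borel probability measure λ on G/Γ and any bounded nonempty open set U ⊆ G, the averaged measure ν defined by ν(A) = ∫_{u∈U} (u_*λ)(A) dμ_G(u) satisfies ν(E) = 0. -/

import Mathlib

/-! Since `Γ` is discrete and countable, `G` is covered by countably many translates of a
neighbourhood of `1` on which `mk : G → G ⧸ Γ` is a measurable embedding, so `λ` lifts to an
s-finite measure `σ` on `G` with `λ ≤ mk_* σ`. With `N = mk⁻¹ E`, Tonelli gives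
`∫ σ(u⁻¹ N) dμ_G(u) = ∫ μ_G(N g⁻¹) dσ(g) = 0`, right translates of the Haar-null set `N` being
Haar-null. Hence `(u_* λ)(E) = λ(u⁻¹ E) ≤ σ(u⁻¹ N) = 0` for `μ_G`-almost every `u`. -/

open MeasureTheory QuotientGroup Pointwise Set Topology

theorem MeasureTheory.exists_sFinite_le_map_of_iUnion_image_eq_univ {α β ι : Type*}
    [MeasurableSpace α] [MeasurableSpace β] [Countable ι] {f : α → β} (hf : Measurable f)
    {s : ι → Set α} (hemb : ∀ i, MeasurableEmbedding ((s i).domRestrict f))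
    (hcover : ⋃ i, f '' s i = univ) (μ : Measure β) [IsFiniteMeasure μ] :
    ∃ ν : Measure α, SFinite ν ∧ μ ≤ ν.map f := by
  refine ⟨Measure.sum fun i => (μ.comap ((s i).domRestrict f)).map (↑), inferInstance, ?_⟩
  have hpiece : ∀ i, ((μ.comap ((s i).domRestrict f)).map (↑)).map f = μ.restrict (f '' s i) := by
    intro i
    rw [Measure.map_map hf measurable_subtype_coe, ← range_domRestrict]
    exact (hemb i).map_comap μ
  calc μ = μ.restrict (⋃ i, f '' s i) := by rw [hcover, Measure.restrict_univ]
    _ ≤ Measure.sum fun i => μ.restrict (f '' s i) := Measure.restrict_iUnion_le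
    _ = _ := by rw [Measure.map_sum hf.aemeasurable]; simp_rw [hpiece]

namespace QuotientGroup

variable {G : Type*} [Group G] {Γ : Subgroup G}

theorem measurableSet_image_mk [MeasurableSpace G] [MeasurableMul G] [Countable Γ] {s : Set G}
    (hs : MeasurableSet s) : MeasurableSet ((↑) '' s : Set (G ⧸ Γ)) := by
  change MeasurableSet (((↑) : G → G ⧸ Γ) ⁻¹' ((↑) '' s))
  rw [preimage_image_mk]
  exact .iUnion fun γ => hs.preimage (measurable_mul_const _)

theorem measurableEmbedding_domRestrict_mk [MeasurableSpace G] [MeasurableMul G] [Countable Γ]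
    {s : Set G} (hs : MeasurableSet s) (hinj : s.InjOn ((↑) : G → G ⧸ Γ)) :
    MeasurableEmbedding (s.domRestrict ((↑) : G → G ⧸ Γ)) where
  injective := injOn_iff_injective.mp hinj
  measurable := measurable_quotient_mk''.comp measurable_subtype_coe
  measurableSet_image' := by
    intro t ht
    rw [domRestrict_eq, image_comp]
    exact measurableSet_image_mk (hs.subtype_image ht)

theorem exists_isClosed_mem_nhds_one_injOn_mk [TopologicalSpace G] [IsTopologicalGroup G]
    [DiscreteTopology Γ] : ∃ V ∈ 𝓝 (1 : G), IsClosed V ∧ V.InjOn ((↑) : G → G ⧸ Γ) := by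
  obtain ⟨W, hW, hWΓ⟩ := nhds_inter_eq_singleton_of_mem_discrete
    (isDiscrete_iff_discreteTopology.mpr ‹_›) Γ.one_mem
  obtain ⟨V, hV, hVc, hVinv, hVW⟩ := exists_closed_nhds_one_inv_eq_mul_subset hW
  refine ⟨V, hV, hVc, fun a ha b hb hab => ?_⟩
  have hmem : a⁻¹ * b ∈ W ∩ Γ :=
    ⟨hVW (mul_mem_mul (hVinv ▸ inv_mem_inv.mpr ha) hb), QuotientGroup.eq.mp hab⟩
  rw [hWΓ] at hmem
  exact inv_mul_eq_one.mp hmem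

theorem exists_sFinite_le_map_mk [TopologicalSpace G] [IsTopologicalGroup G]
    [SecondCountableTopology G] [MeasurableSpace G] [BorelSpace G] [DiscreteTopology Γ]
    (μ : Measure (G ⧸ Γ)) [IsFiniteMeasure μ] :
    ∃ ν : Measure G, SFinite ν ∧ μ ≤ ν.map (↑) := by
  have : Countable Γ := TopologicalSpace.separableSpace_iff_countable.mp inferInstance
  obtain ⟨V, hV, hVc, hinj⟩ := exists_isClosed_mem_nhds_one_injOn_mk (Γ := Γ)
  obtain ⟨t, htc, hcover⟩ := TopologicalSpace.countable_cover_nhds fun x : G =>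
    smul_mem_nhds_self.mpr hV
  have : Countable t := htc.to_subtype
  refine exists_sFinite_le_map_of_iUnion_image_eq_univ (s := fun x : t => (x : G) • V)
    measurable_quotient_mk'' (fun x => measurableEmbedding_domRestrict_mk
      (hVc.measurableSet.const_smul _) ?_) ?_ μ
  · -- `mk (x • v) = x • mk v`, and `x • ·` is injective on `G ⧸ Γ`
    exact InjOn.image_of_comp (f := ((x : G) • ·)) (g := mk)
      ((MulAction.injective (x : G)).comp_injOn hinj :)
  · rw [biUnion_eq_iUnion] at hcover
    rw [← image_iUnion, hcover, image_univ_of_surjective mk_surjective]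

end QuotientGroup

theorem MeasureTheory.Measure.measure_preimage_mul_right_eq_zero {G : Type*} [Group G]
    [TopologicalSpace G] [IsTopologicalGroup G] [LocallyCompactSpace G]
    [SecondCountableTopology G] [MeasurableSpace G] [BorelSpace G]
    (μ : Measure G) [μ.IsHaarMeasure] {s : Set G} (hs : μ s = 0) (g : G) :
    μ ((· * g) ⁻¹' s) = 0 := by
  have h := absolutelyContinuous_isHaarMeasure (μ.map (· * g)) μ hs
  rwa [← MeasurableEquiv.coe_mulRight, MeasurableEquiv.map_apply] at h

theorem stmt0_general {G : Type*} [Group G] [TopologicalSpace G] [IsTopologicalGroup G]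
    [LocallyCompactSpace G] [SecondCountableTopology G]
    [MeasurableSpace G] [BorelSpace G]
    (μG : Measure G) [μG.IsHaarMeasure]
    (Γ : Subgroup G) (hΓ : DiscreteTopology Γ)
    (E : Set (G ⧸ Γ)) (hE : MeasurableSet E)
    (hnull : μG ((QuotientGroup.mk : G → G ⧸ Γ) ⁻¹' E) = 0)
    (lam : Measure (G ⧸ Γ)) [IsProbabilityMeasure lam]
    (U : Set G) :
    ∫⁻ u in U, (Measure.map (fun x : G ⧸ Γ => u • x) lam) E ∂μG = 0 := by
  obtain ⟨σ, _, hlam⟩ := exists_sFinite_le_map_mk lam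
  have hS : MeasurableSet {p : G × G | p.1 * p.2 ∈ (↑) ⁻¹' E} := measurable_mul hE
  have hprod : μG.prod σ {p | p.1 * p.2 ∈ (↑) ⁻¹' E} = 0 := by
    rw [Measure.prod_apply_symm hS]
    exact (lintegral_congr (Measure.measure_preimage_mul_right_eq_zero μG hnull)).trans
      lintegral_zero
  have hsmul : ∀ u : G, Measurable fun x : G ⧸ Γ => u • x := fun u =>
    _root_.measurable_from_quotient.mpr (measurable_quotient_mk''.comp (measurable_const_mul u))
  have hae : ∀ᵐ u ∂μG, (Measure.map (fun x : G ⧸ Γ => u • x) lam) E = 0 := by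
    filter_upwards [Measure.measure_ae_null_of_prod_null hprod] with u hu
    rw [Measure.map_apply (hsmul u) hE]
    refine Measure.absolutelyContinuous_of_le hlam ?_
    rwa [Measure.map_apply measurable_quotient_mk'' (hE.preimage (hsmul u))]
  rw [lintegral_congr_ae (ae_restrict_of_ae hae), lintegral_zero]

/-- If a measurable set `E ⊆ G/Γ` has `μ_G`-null preimage in `G`, then for any
Borel probability measure `λ` on `G/Γ` and any bounded nonempty open `U ⊆ G`, the Haar-averaged
measure `ν(A) = ∫_{u ∈ U} (u_*λ)(A) dμ_G(u)` satisfies `ν(E) = 0`. -/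
theorem stmt0 {G : Type*} [Group G] [TopologicalSpace G] [IsTopologicalGroup G]
    [LocallyCompactSpace G] [SecondCountableTopology G]
    [MeasurableSpace G] [BorelSpace G]
    (μG : Measure G) [μG.IsHaarMeasure]
    (Γ : Subgroup G) (hΓ : DiscreteTopology Γ)
    (E : Set (G ⧸ Γ)) (hE : MeasurableSet E)
    (hnull : μG ((QuotientGroup.mk : G → G ⧸ Γ) ⁻¹' E) = 0)
    (lam : Measure (G ⧸ Γ)) [IsProbabilityMeasure lam]
    (U : Set G) (hUopen : IsOpen U) (hUne : U.Nonempty) (hUbdd : IsCompact (closure U)) :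
    ∫⁻ u in U, (Measure.map (fun x : G ⧸ Γ => u • x) lam) E ∂μG = 0 :=
  stmt0_general μG Γ hΓ E hE hnull lam U
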